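/- The gap between the ITE risk and the PIP loss admits the exact decomposition ε_ITE − ε_PIP = H1 + H2 + H3 + H4, where H1 = u_0 ∫_𝒳 [ r_1(x)² − ∫_𝒮 r̈_1(x,s)² p_0(s|x) ds ] p_0(x) dx, H2 = u_1 ∫_𝒳 [ r_0(x)² − ∫_𝒮 r̈_0(x,s)² p_1(s|x) ds ] p_1(x) dx, H3 = 2 u_0 ∫_𝒳 [ ∫_𝒮 r_0(x) r̈_1(x,s) p_0(s|x) ds − r_1(x) r_0(x) ] p_0(x) dx, and H4 = 2 u_1 ∫_𝒳 [ ∫_𝒮 r_1(x) r̈_0(x,s) p_1(s|x) ds − r_0(x) r_1(x) ] p_1(x) dx. -/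

import Mathlib

/-! Both sides are linear combinations of integrals, and the identity splits into one identity per
treatment arm, weighted by `u_t`. Within an arm it is the pointwise identity
`(a - b)² - b² + 2 b d - d² = (a² - d²) + 2 (b d - a b)` integrated against `μ ⊗ₘ κ`;
square integrability makes every product integrable (Hölder), and then Fubini for `μ ⊗ₘ κ`
lets the integrals be split term by term. -/

open MeasureTheory ProbabilityTheory

namespace MeasureTheory

variable {α β : Type*} [MeasurableSpace α] [MeasurableSpace β] {μ : Measure α}

theorem integral_sub_sq {f g : α → ℝ} (hf : MemLp f 2 μ) (hg : MemLp g 2 μ) :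
    ∫ x, (f x - g x) ^ 2 ∂μ = ∫ x, f x ^ 2 ∂μ - 2 * ∫ x, f x * g x ∂μ + ∫ x, g x ^ 2 ∂μ := by
  have hfg : Integrable (fun x => 2 * (f x * g x)) μ := (hf.integrable_mul hg).const_mul 2
  have hdiff : Integrable (fun x => f x ^ 2 - 2 * (f x * g x)) μ := hf.integrable_sq.sub hfg
  simp_rw [sub_sq, mul_assoc]
  rw [integral_add hdiff hg.integrable_sq, integral_sub hf.integrable_sq hfg, integral_const_mul]

theorem MemLp.comp_fst_compProd {p : ENNReal} {f : α → ℝ} (hf : MemLp f p μ) [SFinite μ]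
    (κ : Kernel α β) [IsMarkovKernel κ] :
    MemLp (fun z : α × β => f z.1) p (μ ⊗ₘ κ) :=
  hf.comp_measurePreserving ⟨measurable_fst, Measure.fst_compProd μ κ⟩

theorem Integrable.integral_compProd_measure [SFinite μ] {κ : Kernel α β} [IsSFiniteKernel κ]
    {f : α × β → ℝ} (hf : Integrable f (μ ⊗ₘ κ)) :
    Integrable (fun x => ∫ y, f (x, y) ∂κ x) μ := by
  rw [Measure.compProd] at hf
  simpa using hf.integral_compProd

end MeasureTheory

theorem ite_sub_pip_arm_eq {α β : Type*} [MeasurableSpace α] [MeasurableSpace β]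
    (μ : Measure α) [SFinite μ] (κ : Kernel α β) [IsMarkovKernel κ]
    {a b : α → ℝ} {d : α → β → ℝ} (ha : MemLp a 2 μ) (hb : MemLp b 2 μ)
    (hd : MemLp (fun z => d z.1 z.2) 2 (μ ⊗ₘ κ)) :
    ∫ x, (a x - b x) ^ 2 ∂μ
        - (∫ x, b x ^ 2 ∂μ + ∫ x, ∫ s, d x s ^ 2 ∂κ x ∂μ - 2 * ∫ x, ∫ s, b x * d x s ∂κ x ∂μ)
      = ∫ x, (a x ^ 2 - ∫ s, d x s ^ 2 ∂κ x) ∂μ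
        + 2 * ∫ x, (∫ s, b x * d x s ∂κ x - a x * b x) ∂μ := by
  have hdd : Integrable (fun x => ∫ s, d x s ^ 2 ∂κ x) μ :=
    hd.integrable_sq.integral_compProd_measure
  have hbd : Integrable (fun x => ∫ s, b x * d x s ∂κ x) μ :=
    ((hb.comp_fst_compProd κ).integrable_mul hd).integral_compProd_measure
  have hab : Integrable (fun x => a x * b x) μ := ha.integrable_mul hb
  rw [integral_sub ha.integrable_sq hdd, integral_sub hbd hab, integral_sub_sq ha hb]
  ring

theorem ite_minus_pip_decomposition_general
    {k m : ℕ}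
    (μ0 μ1 : Measure (EuclideanSpace ℝ (Fin k)))
    [IsProbabilityMeasure μ0] [IsProbabilityMeasure μ1]
    (ν0 ν1 : Kernel (EuclideanSpace ℝ (Fin k)) (EuclideanSpace ℝ (Fin m)))
    [IsMarkovKernel ν0] [IsMarkovKernel ν1]
    (u0 u1 : ℝ)
    -- residuals
    (r0 r1 : EuclideanSpace ℝ (Fin k) → ℝ)
    (rd0 rd1 : EuclideanSpace ℝ (Fin k) → EuclideanSpace ℝ (Fin m) → ℝ)
    -- square integrability against the relevant measures
    (h00 : MemLp r0 2 μ0) (h01 : MemLp r0 2 μ1)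
    (h10 : MemLp r1 2 μ0) (h11 : MemLp r1 2 μ1)
    (hd01 : MemLp (fun p => rd0 p.1 p.2) 2 (μ1 ⊗ₘ ν1))
    (hd10 : MemLp (fun p => rd1 p.1 p.2) 2 (μ0 ⊗ₘ ν0)) :
    -- ε_ITE − ε_PIP = H1 + H2 + H3 + H4
    (u0 * ∫ x, (r1 x - r0 x) ^ 2 ∂μ0 + u1 * ∫ x, (r1 x - r0 x) ^ 2 ∂μ1)
      - -- ε_PIP = ε_F + ε̈_CF − 2 Σ_t u_t ∫∫ r_t(x) r̈_{1−t}(x,s) p_t(s|x) p_t(x) ds dx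
      ((u0 * ∫ x, (r0 x) ^ 2 ∂μ0 + u1 * ∫ x, (r1 x) ^ 2 ∂μ1)
        + (u1 * ∫ x, ∫ s, (rd0 x s) ^ 2 ∂(ν1 x) ∂μ1
            + u0 * ∫ x, ∫ s, (rd1 x s) ^ 2 ∂(ν0 x) ∂μ0)
        - 2 * (u0 * ∫ x, ∫ s, r0 x * rd1 x s ∂(ν0 x) ∂μ0
            + u1 * ∫ x, ∫ s, r1 x * rd0 x s ∂(ν1 x) ∂μ1))
      =
      -- H1
      u0 * ∫ x, ((r1 x) ^ 2 - ∫ s, (rd1 x s) ^ 2 ∂(ν0 x)) ∂μ0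
      -- H2
      + u1 * ∫ x, ((r0 x) ^ 2 - ∫ s, (rd0 x s) ^ 2 ∂(ν1 x)) ∂μ1
      -- H3
      + 2 * u0 * ∫ x, ((∫ s, r0 x * rd1 x s ∂(ν0 x)) - r1 x * r0 x) ∂μ0
      -- H4
      + 2 * u1 * ∫ x, ((∫ s, r1 x * rd0 x s ∂(ν1 x)) - r0 x * r1 x) ∂μ1 := by
  have arm0 := ite_sub_pip_arm_eq μ0 ν0 h10 h00 hd10
  have arm1 := ite_sub_pip_arm_eq μ1 ν1 h01 h11 hd01
  have sq_comm : ∫ x, (r1 x - r0 x) ^ 2 ∂μ1 = ∫ x, (r0 x - r1 x) ^ 2 ∂μ1 := by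
    simp_rw [sub_sq_comm]
  linear_combination u0 * arm0 + u1 * arm1 + u1 * sq_comm

/-- exact decomposition of the gap between the ITE risk and the PIP loss.
`𝒳 = ℝ^k` is the covariate space, `𝒮 = ℝ^m` the space of post-treatment variables and
`R` the representation space.  `μ0, μ1` are the covariate distributions of the two
treatment groups, `ν0, ν1` the conditional (Markov) kernels `x ↦ p_t(s|x)`,
`u0, u1 ∈ (0,1)` with `u0 + u1 = 1` the marginal treatment probabilities.
`f0, f1` is the outcome predictor, `fs0, fs1` the true outcome functions, `ψ` the
representation map and `q0, q1` the pseudo-outcome constructor.  With the residuals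
`r_t(x) = f_t(x) − f*_t(x)` and `r̈_t(x,s) = f_t(x) − q_t(x, ψ(s))`, the gap
`ε_ITE − ε_PIP` equals `H1 + H2 + H3 + H4`. -/
theorem ite_minus_pip_decomposition
    {k m : ℕ} {R : Type*} [MeasurableSpace R]
    (μ0 μ1 : Measure (EuclideanSpace ℝ (Fin k)))
    [IsProbabilityMeasure μ0] [IsProbabilityMeasure μ1]
    (ν0 ν1 : Kernel (EuclideanSpace ℝ (Fin k)) (EuclideanSpace ℝ (Fin m)))
    [IsMarkovKernel ν0] [IsMarkovKernel ν1]
    (u0 u1 : ℝ) (hu0 : u0 ∈ Set.Ioo (0 : ℝ) 1) (hu1 : u1 ∈ Set.Ioo (0 : ℝ) 1)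
    (husum : u0 + u1 = 1)
    (f0 f1 fs0 fs1 : EuclideanSpace ℝ (Fin k) → ℝ)
    (hf0 : Measurable f0) (hf1 : Measurable f1)
    (hfs0 : Measurable fs0) (hfs1 : Measurable fs1)
    (ψ : EuclideanSpace ℝ (Fin m) → R) (hψ : Measurable ψ)
    (q0 q1 : EuclideanSpace ℝ (Fin k) → R → ℝ)
    (hq0 : Measurable (Function.uncurry q0)) (hq1 : Measurable (Function.uncurry q1))
    -- residuals
    (r0 r1 : EuclideanSpace ℝ (Fin k) → ℝ)
    (hr0 : r0 = fun x => f0 x - fs0 x) (hr1 : r1 = fun x => f1 x - fs1 x)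
    (rd0 rd1 : EuclideanSpace ℝ (Fin k) → EuclideanSpace ℝ (Fin m) → ℝ)
    (hrd0 : rd0 = fun x s => f0 x - q0 x (ψ s))
    (hrd1 : rd1 = fun x s => f1 x - q1 x (ψ s))
    -- square integrability against the relevant measures
    (h00 : MemLp r0 2 μ0) (h01 : MemLp r0 2 μ1)
    (h10 : MemLp r1 2 μ0) (h11 : MemLp r1 2 μ1)
    (hd00 : MemLp (fun p => rd0 p.1 p.2) 2 (μ0 ⊗ₘ ν0))
    (hd01 : MemLp (fun p => rd0 p.1 p.2) 2 (μ1 ⊗ₘ ν1))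
    (hd10 : MemLp (fun p => rd1 p.1 p.2) 2 (μ0 ⊗ₘ ν0))
    (hd11 : MemLp (fun p => rd1 p.1 p.2) 2 (μ1 ⊗ₘ ν1)) :
    -- ε_ITE − ε_PIP = H1 + H2 + H3 + H4
    (u0 * ∫ x, (r1 x - r0 x) ^ 2 ∂μ0 + u1 * ∫ x, (r1 x - r0 x) ^ 2 ∂μ1)
      - -- ε_PIP = ε_F + ε̈_CF − 2 Σ_t u_t ∫∫ r_t(x) r̈_{1−t}(x,s) p_t(s|x) p_t(x) ds dx
      ((u0 * ∫ x, (r0 x) ^ 2 ∂μ0 + u1 * ∫ x, (r1 x) ^ 2 ∂μ1)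
        + (u1 * ∫ x, ∫ s, (rd0 x s) ^ 2 ∂(ν1 x) ∂μ1
            + u0 * ∫ x, ∫ s, (rd1 x s) ^ 2 ∂(ν0 x) ∂μ0)
        - 2 * (u0 * ∫ x, ∫ s, r0 x * rd1 x s ∂(ν0 x) ∂μ0
            + u1 * ∫ x, ∫ s, r1 x * rd0 x s ∂(ν1 x) ∂μ1))
      =
      -- H1
      u0 * ∫ x, ((r1 x) ^ 2 - ∫ s, (rd1 x s) ^ 2 ∂(ν0 x)) ∂μ0
      -- H2
      + u1 * ∫ x, ((r0 x) ^ 2 - ∫ s, (rd0 x s) ^ 2 ∂(ν1 x)) ∂μ1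
      -- H3
      + 2 * u0 * ∫ x, ((∫ s, r0 x * rd1 x s ∂(ν0 x)) - r1 x * r0 x) ∂μ0
      -- H4
      + 2 * u1 * ∫ x, ((∫ s, r1 x * rd0 x s ∂(ν1 x)) - r0 x * r1 x) ∂μ1 :=
  ite_minus_pip_decomposition_general μ0 μ1 ν0 ν1 u0 u1 r0 r1 rd0 rd1 h00 h01 h10 h11 hd01 hd10
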